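/- Under the spectral hypotheses, the upper and lower s-th outer angular values can be computed over trace spaces only: θ̂_s := sup_{V∈𝒢(s,d)} limsup_{n→∞} (1/n) a_{1,n}(V) = sup_{V∈𝒟_0(s,d)} limsup_{n→∞} (1/n) a_{1,n}(V), and θ̂_s(lower) := sup_{V∈𝒢(s,d)} liminf_{n→∞} (1/n) a_{1,n}(V) = sup_{V∈𝒟_0(s,d)} liminf_{n→∞} (1/n) a_{1,n}(V), where a_{1,n}(V) := Σ_{j=1}^{n} ∠(Φ(j−1,0)V, Φ(j,0)V). -/

import Mathlib

open Filter

noncomputable section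

abbrev Euc (d : ℕ) := EuclideanSpace ℝ (Fin d)

/-- Angle between the lines spanned by two vectors. -/
noncomputable def vecAngle {d : ℕ} (v w : Euc d) : ℝ :=
  Real.arccos (|(inner ℝ v w : ℝ)| / (‖v‖ * ‖w‖))

/-- Largest principal angle between two subspaces of equal dimension. -/
noncomputable def subAngle {d : ℕ} (V W : Submodule ℝ (Euc d)) : ℝ :=
  Real.arccos (sInf {c : ℝ | ∃ v ∈ V, ‖v‖ = 1 ∧
    c = sSup {r : ℝ | ∃ w ∈ W, ‖w‖ = 1 ∧ r = (inner ℝ v w : ℝ)}})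

/-- Forward product `A (m+n-1) ⋯ A m`. -/
noncomputable def PhiF {d : ℕ} (A : ℕ → (Euc d →L[ℝ] Euc d)) (m : ℕ) : ℕ → (Euc d →L[ℝ] Euc d)
  | 0 => 1
  | n + 1 => A (m + n) ∘L PhiF A m n

/-- Solution operator `Φ(n,m) = A_{n-1} ⋯ A_m` for `n ≥ m`,
`Φ(n,m) = A_n⁻¹ ⋯ A_{m-1}⁻¹` for `n < m`. -/
noncomputable def Phi {d : ℕ} (A : ℕ → (Euc d →L[ℝ] Euc d)) (n m : ℕ) : Euc d →L[ℝ] Euc d :=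
  if m ≤ n then PhiF A m (n - m) else Ring.inverse (PhiF A n (m - n))

/-- `a_{m,n}(V) = Σ_{j=m}^n ∠(Φ(j-1,0)V, Φ(j,0)V)`. -/
noncomputable def angSum {d : ℕ} (A : ℕ → (Euc d →L[ℝ] Euc d)) (V : Submodule ℝ (Euc d))
    (m n : ℕ) : ℝ :=
  ∑ j ∈ Finset.Icc m n, subAngle (V.map (Phi A (j - 1) 0 : Euc d →ₗ[ℝ] Euc d)) (V.map (Phi A j 0 : Euc d →ₗ[ℝ] Euc d))

/-- Fiber projector `𝒫_{k,i} = P_{k,i}^s − P_{k,i+1}^s`. -/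
noncomputable def fiberP {d : ℕ} (P : ℕ → ℕ → (Euc d →L[ℝ] Euc d)) (k i : ℕ) :
    Euc d →L[ℝ] Euc d :=
  P k i - P k (i + 1)

/-- The spectral fiber `𝒲_k^i = range 𝒫_{k,i}`. -/
noncomputable def fiberW {d : ℕ} (P : ℕ → ℕ → (Euc d →L[ℝ] Euc d)) (k i : ℕ) :
    Submodule ℝ (Euc d) :=
  LinearMap.range (fiberP P k i : Euc d →ₗ[ℝ] Euc d)

/-- The trace space `𝒯_k(V) = Σ_{i=1}^ℓ 𝒫_{k,i}(Q_{k,i}^s V)`, where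
`Q_{k,i}^s V = range(P_{k,i}^s) ∩ V`. -/
noncomputable def traceSpace {d : ℕ} (P : ℕ → ℕ → (Euc d →L[ℝ] Euc d)) (ℓ k : ℕ)
    (V : Submodule ℝ (Euc d)) : Submodule ℝ (Euc d) :=
  ⨆ i ∈ Finset.Icc 1 ℓ, (LinearMap.range (P k i : Euc d →ₗ[ℝ] Euc d) ⊓ V).map (fiberP P k i : Euc d →ₗ[ℝ] Euc d)

/-- `V` is a trace space at time `k`: a (direct) sum of subspaces of the fibers. -/
def IsTraceAt {d : ℕ} (P : ℕ → ℕ → (Euc d →L[ℝ] Euc d)) (ℓ k : ℕ)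
    (V : Submodule ℝ (Euc d)) : Prop :=
  ∃ W : ℕ → Submodule ℝ (Euc d),
    (∀ i, 1 ≤ i → i ≤ ℓ → W i ≤ fiberW P k i) ∧ V = ⨆ i ∈ Finset.Icc 1 ℓ, W i

/-!
Split `V` orthogonally along its filtration `Q_{0,i}^s V = range P_{0,i}^s ∩ V` into layers `vᵢ`
and send `v` to `∑ᵢ 𝒫_{0,i} vᵢ`. This map is injective on `V` and its image is the trace space
`𝒯₀(V)`. The error `v - ∑ᵢ 𝒫_{0,i} vᵢ = ∑ᵢ P_{0,i+1}^s vᵢ` grows at most like `(σ_{i+1}^+)ⁿ` in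
each layer, while the fiber component `𝒫_{0,i} vᵢ`, which determines `vᵢ`, grows at least like
the strictly larger `(σ_i^-)ⁿ`. So the unit spheres of `Φ(n,0)V` and `Φ(n,0)𝒯₀(V)` are
`o(1)`-close, the consecutive angles along the two orbits differ by `o(1)`, and by Cesàro the
averaged angle sums of `V` and of `𝒯₀(V)` have the same limsup and liminf.
-/

open Topology Uniformity

section Sequences

lemma sum_Icc_one_sub_succ {M : Type*} [AddCommGroup M] (f : ℕ → M) (ℓ : ℕ) :
    ∑ i ∈ Finset.Icc 1 ℓ, (f i - f (i + 1)) = f 1 - f (ℓ + 1) := by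
  rw [← Finset.Ico_add_one_right_eq_Icc, ← neg_sub, ← Finset.sum_Ico_sub f (by omega : 1 ≤ ℓ + 1),
    ← Finset.sum_neg_distrib]
  simp only [neg_sub]

lemma tendsto_sum_Icc_div_of_tendsto_zero {b : ℕ → ℝ} (h : Tendsto b atTop (𝓝 0)) :
    Tendsto (fun n : ℕ => (∑ j ∈ Finset.Icc 1 n, b j) / n) atTop (𝓝 0) := by
  have hc := (h.comp (tendsto_add_atTop_nat 1)).cesaro
  refine hc.congr fun n => ?_
  rw [← Finset.Ico_add_one_right_eq_Icc, Finset.sum_Ico_eq_sum_range, Nat.add_sub_cancel,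
    div_eq_inv_mul]
  simp only [Function.comp_def, add_comm]

variable {ι : Type*} {l : Filter ι} {f g : ι → ℝ}

lemma limsup_eq_of_tendsto_sub [l.NeBot] (hg : IsBoundedUnder (· ≤ ·) l g)
    (hg' : IsBoundedUnder (· ≥ ·) l g) (h : Tendsto (f - g) l (𝓝 0)) :
    limsup f l = limsup g l := by
  apply le_antisymm
  · calc limsup f l = limsup (g + (f - g)) l := by rw [add_sub_cancel]
      _ ≤ limsup g l + limsup (f - g) l :=
          limsup_add_le hg' hg h.isBoundedUnder_ge.isCoboundedUnder_le h.isBoundedUnder_le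
      _ = limsup g l := by rw [h.limsup_eq, add_zero]
  · calc limsup g l = limsup g l + liminf (f - g) l := by rw [h.liminf_eq, add_zero]
      _ ≤ limsup (g + (f - g)) l :=
          le_limsup_add hg hg'.isCoboundedUnder_le h.isBoundedUnder_le h.isBoundedUnder_ge
      _ = limsup f l := by rw [add_sub_cancel]

lemma liminf_eq_of_tendsto_sub [l.NeBot] (hg : IsBoundedUnder (· ≤ ·) l g)
    (hg' : IsBoundedUnder (· ≥ ·) l g) (h : Tendsto (f - g) l (𝓝 0)) :
    liminf f l = liminf g l := by
  apply le_antisymm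
  · calc liminf f l = liminf ((f - g) + g) l := by rw [sub_add_cancel]
      _ ≤ limsup (f - g) l + liminf g l :=
          liminf_add_le h.isBoundedUnder_ge h.isBoundedUnder_le hg' hg.isCoboundedUnder_ge
      _ = liminf g l := by rw [h.limsup_eq, zero_add]
  · calc liminf g l = liminf (f - g) l + liminf g l := by rw [h.liminf_eq, zero_add]
      _ ≤ liminf ((f - g) + g) l :=
          le_liminf_add h.isBoundedUnder_ge h.isBoundedUnder_le hg' hg.isCoboundedUnder_ge
      _ = liminf f l := by rw [sub_add_cancel]

lemma tendsto_arccos_sub_arccos {a b : ι → ℝ} (ha : ∀ i, a i ∈ Set.Icc (-1) 1)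
    (hb : ∀ i, b i ∈ Set.Icc (-1) 1) (h : Tendsto (fun i => a i - b i) l (𝓝 0)) :
    Tendsto (fun i => Real.arccos (a i) - Real.arccos (b i)) l (𝓝 0) := by
  have huc : UniformContinuousOn Real.arccos (Set.Icc (-1) 1) :=
    isCompact_Icc.uniformContinuousOn_of_continuous Real.continuous_arccos.continuousOn
  have hab : Tendsto (fun i => (a i, b i)) l (𝓤 ℝ ⊓ 𝓟 (Set.Icc (-1) 1 ×ˢ Set.Icc (-1) 1)) :=
    tendsto_inf.2 ⟨tendsto_uniformity_iff_dist_tendsto_zero.2 <| by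
      simpa only [Real.dist_eq, abs_zero] using h.abs,
      tendsto_principal.2 <| .of_forall fun i => ⟨ha i, hb i⟩⟩
  have := tendsto_uniformity_iff_dist_tendsto_zero.1 (Tendsto.comp huc hab)
  simp only [Function.comp_def, Real.dist_eq] at this
  exact tendsto_zero_iff_abs_tendsto_zero _ |>.2 this

end Sequences

section PrincipalAngle

variable {E : Type*} [NormedAddCommGroup E] [InnerProductSpace ℝ E]

def maxInner (v : E) (W : Submodule ℝ E) : ℝ :=
  sSup {r : ℝ | ∃ w ∈ W, ‖w‖ = 1 ∧ r = (inner ℝ v w : ℝ)}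

def cosMaxAngle (V W : Submodule ℝ E) : ℝ :=
  sInf {c : ℝ | ∃ v ∈ V, ‖v‖ = 1 ∧ c = maxInner v W}

lemma subAngle_eq_arccos_cosMaxAngle {d : ℕ} (V W : Submodule ℝ (Euc d)) :
    subAngle V W = Real.arccos (cosMaxAngle V W) := rfl

def UnitSphereClose (δ : ℝ) (V W : Submodule ℝ E) : Prop :=
  ∀ v ∈ V, ‖v‖ = 1 → ∃ w ∈ W, ‖w‖ = 1 ∧ ‖v - w‖ ≤ δ

lemma Submodule.exists_mem_norm_eq_one {V : Submodule ℝ E} (hV : V ≠ ⊥) : ∃ v ∈ V, ‖v‖ = 1 := by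
  obtain ⟨v, hv, hv0⟩ := Submodule.exists_mem_ne_zero_of_ne_bot hV
  exact ⟨‖v‖⁻¹ • v, V.smul_mem _ hv, norm_smul_inv_norm hv0⟩

lemma UnitSphereClose.eq_bot {δ : ℝ} {V W : Submodule ℝ E} (h : UnitSphereClose δ V W)
    (hW : W = ⊥) : V = ⊥ := by
  by_contra hV
  obtain ⟨v, hv, hv1⟩ := Submodule.exists_mem_norm_eq_one hV
  obtain ⟨w, hw, hw1, -⟩ := h v hv hv1
  rw [hW, Submodule.mem_bot] at hw
  simp [hw] at hw1

lemma inner_le_maxInner (v : E) {W : Submodule ℝ E} {w : E} (hw : w ∈ W) (hw1 : ‖w‖ = 1) :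
    inner ℝ v w ≤ maxInner v W :=
  le_csSup ⟨‖v‖, by
    rintro r ⟨w', -, hw'1, rfl⟩
    simpa [hw'1] using real_inner_le_norm v w'⟩ ⟨w, hw, hw1, rfl⟩

lemma maxInner_nonneg (v : E) (W : Submodule ℝ E) : 0 ≤ maxInner v W := by
  rcases eq_or_ne W ⊥ with rfl | hW
  · have : {r : ℝ | ∃ w ∈ (⊥ : Submodule ℝ E), ‖w‖ = 1 ∧ r = inner ℝ v w} = ∅ := by
      ext r; simp
    rw [maxInner, this, Real.sSup_empty]
  obtain ⟨w, hw, hw1⟩ := Submodule.exists_mem_norm_eq_one hW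
  have h₁ := inner_le_maxInner v hw hw1
  have h₂ := inner_le_maxInner v (W.neg_mem hw) (by rwa [norm_neg])
  rw [inner_neg_right] at h₂
  linarith

lemma maxInner_le_one {v : E} (hv : ‖v‖ = 1) (W : Submodule ℝ E) : maxInner v W ≤ 1 :=
  Real.sSup_le (by
    rintro r ⟨w, -, hw1, rfl⟩
    simpa [hv, hw1] using real_inner_le_norm v w) zero_le_one

lemma cosMaxAngle_le_maxInner {V : Submodule ℝ E} (W : Submodule ℝ E) {v : E} (hv : v ∈ V)
    (hv1 : ‖v‖ = 1) : cosMaxAngle V W ≤ maxInner v W :=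
  csInf_le ⟨0, by rintro c ⟨v', -, -, rfl⟩; exact maxInner_nonneg v' W⟩ ⟨v, hv, hv1, rfl⟩

lemma cosMaxAngle_bot (W : Submodule ℝ E) : cosMaxAngle ⊥ W = 0 := by
  have : {c : ℝ | ∃ v ∈ (⊥ : Submodule ℝ E), ‖v‖ = 1 ∧ c = maxInner v W} = ∅ := by
    ext c; simp
  rw [cosMaxAngle, this, Real.sInf_empty]

lemma cosMaxAngle_mem_Icc (V W : Submodule ℝ E) : cosMaxAngle V W ∈ Set.Icc (-1) 1 := by
  refine ⟨le_trans (by norm_num) (Real.sInf_nonneg ?_), ?_⟩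
  · rintro c ⟨v, -, -, rfl⟩
    exact maxInner_nonneg v W
  rcases eq_or_ne V ⊥ with rfl | hV
  · exact (cosMaxAngle_bot W).trans_le zero_le_one
  obtain ⟨v, hv, hv1⟩ := Submodule.exists_mem_norm_eq_one hV
  exact (cosMaxAngle_le_maxInner W hv hv1).trans (maxInner_le_one hv1 W)

lemma cosMaxAngle_le_add {V₁ W₁ V₂ W₂ : Submodule ℝ E} {δ δ' : ℝ} (hV₂ : V₂ ≠ ⊥)
    (hδ : 0 ≤ δ) (hδ' : 0 ≤ δ') (hV : UnitSphereClose δ V₂ V₁) (hW : UnitSphereClose δ' W₁ W₂) :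
    cosMaxAngle V₁ W₁ ≤ cosMaxAngle V₂ W₂ + (δ + δ') := by
  rw [← sub_le_iff_le_add]
  obtain ⟨v, hv, hv1⟩ := Submodule.exists_mem_norm_eq_one hV₂
  refine le_csInf ⟨_, v, hv, hv1, rfl⟩ ?_
  rintro c ⟨v₂, hv₂, hv₂1, rfl⟩
  obtain ⟨v₁, hv₁, hv₁1, hvv⟩ := hV v₂ hv₂ hv₂1
  rw [sub_le_iff_le_add]
  refine (cosMaxAngle_le_maxInner W₁ hv₁ hv₁1).trans (Real.sSup_le ?_ (by
    linarith [maxInner_nonneg v₂ W₂]))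
  rintro r ⟨w₁, hw₁, hw₁1, rfl⟩
  obtain ⟨w₂, hw₂, hw₂1, hww⟩ := hW w₁ hw₁ hw₁1
  have hsplit : inner ℝ v₁ w₁ = inner ℝ (v₁ - v₂) w₁ + inner ℝ v₂ (w₁ - w₂) + inner ℝ v₂ w₂ := by
    simp only [inner_sub_left, inner_sub_right]
    ring
  have h₁ : inner ℝ (v₁ - v₂) w₁ ≤ δ := by
    have := real_inner_le_norm (v₁ - v₂) w₁
    rw [hw₁1, mul_one, norm_sub_rev] at this
    linarith
  have h₂ : inner ℝ v₂ (w₁ - w₂) ≤ δ' := by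
    have := real_inner_le_norm v₂ (w₁ - w₂)
    rw [hv₂1, one_mul] at this
    linarith
  linarith [inner_le_maxInner v₂ hw₂ hw₂1]

lemma abs_cosMaxAngle_sub_le {V₁ W₁ V₂ W₂ : Submodule ℝ E} {δ δ' : ℝ} (hδ : 0 ≤ δ)
    (hδ' : 0 ≤ δ') (hV₁₂ : UnitSphereClose δ V₁ V₂) (hV₂₁ : UnitSphereClose δ V₂ V₁)
    (hW₁₂ : UnitSphereClose δ' W₁ W₂) (hW₂₁ : UnitSphereClose δ' W₂ W₁) :
    |cosMaxAngle V₁ W₁ - cosMaxAngle V₂ W₂| ≤ δ + δ' := by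
  rcases eq_or_ne V₂ ⊥ with hV₂ | hV₂
  · rw [hV₁₂.eq_bot hV₂, hV₂, cosMaxAngle_bot, cosMaxAngle_bot, sub_self, abs_zero]
    positivity
  have hV₁ : V₁ ≠ ⊥ := fun h => hV₂ (hV₂₁.eq_bot h)
  rw [abs_sub_le_iff]
  constructor
  · linarith [cosMaxAngle_le_add hV₂ hδ hδ' hV₂₁ hW₁₂]
  · linarith [cosMaxAngle_le_add hV₁ hδ hδ' hV₁₂ hW₂₁]

lemma norm_sub_inv_norm_smul_le {a : E} (ha : ‖a‖ = 1) (b : E) :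
    ‖a - ‖b‖⁻¹ • b‖ ≤ 2 * ‖a - b‖ := by
  rcases eq_or_ne b 0 with rfl | hb
  · simp [ha]
  have hb' : ‖b - ‖b‖⁻¹ • b‖ = |‖b‖ - ‖a‖| := by
    have hb0 : ‖b‖ ≠ 0 := norm_ne_zero_iff.2 hb
    rw [show b - ‖b‖⁻¹ • b = (1 - ‖b‖⁻¹) • b by rw [sub_smul, one_smul], norm_smul,
      Real.norm_eq_abs, ← abs_norm b, ← abs_mul, ha, abs_norm]
    congr 1
    field_simp
  calc ‖a - ‖b‖⁻¹ • b‖ ≤ ‖a - b‖ + ‖b - ‖b‖⁻¹ • b‖ := norm_sub_le_norm_sub_add_norm_sub _ _ _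
    _ ≤ ‖a - b‖ + ‖a - b‖ := by
        rw [hb', norm_sub_rev a b]
        gcongr
        exact abs_norm_sub_norm_le b a
    _ = 2 * ‖a - b‖ := by ring

variable {F : Type*} [NormedAddCommGroup F] [InnerProductSpace ℝ F]

lemma unitSphereClose_map_of_norm_sub_le {f g : E →ₗ[ℝ] F} {V : Submodule ℝ E} {ε : ℝ}
    (hε0 : 0 ≤ ε) (hε : ε ≤ 1 / 2) (h : ∀ v ∈ V, ‖f v - g v‖ ≤ ε * ‖g v‖) :
    UnitSphereClose (4 * ε) (V.map f) (V.map g) ∧ UnitSphereClose (4 * ε) (V.map g) (V.map f) := by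
  constructor
  · rintro _ ⟨v, hv, rfl⟩ hfv
    have hgv : ‖g v‖ ≤ 2 := by
      have := norm_le_norm_add_norm_sub' (g v) (f v)
      rw [norm_sub_rev] at this
      nlinarith [h v hv]
    have hg0 : g v ≠ 0 := by
      intro h0
      have := h v hv
      simp [h0, hfv] at this
      linarith
    refine ⟨‖g v‖⁻¹ • g v, Submodule.smul_mem _ _ (Submodule.mem_map_of_mem hv),
      norm_smul_inv_norm hg0, ?_⟩
    calc ‖f v - ‖g v‖⁻¹ • g v‖ ≤ 2 * ‖f v - g v‖ := norm_sub_inv_norm_smul_le hfv _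
      _ ≤ 2 * (ε * 2) := by gcongr; exact (h v hv).trans (by gcongr)
      _ = 4 * ε := by ring
  · rintro _ ⟨v, hv, rfl⟩ hgv
    have hfg : ‖f v - g v‖ ≤ ε := by simpa [hgv] using h v hv
    have hf0 : f v ≠ 0 := by
      intro h0
      simp [h0, hgv] at hfg
      linarith
    refine ⟨‖f v‖⁻¹ • f v, Submodule.smul_mem _ _ (Submodule.mem_map_of_mem hv),
      norm_smul_inv_norm hf0, ?_⟩
    calc ‖g v - ‖f v‖⁻¹ • f v‖ ≤ 2 * ‖g v - f v‖ := norm_sub_inv_norm_smul_le hgv _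
      _ ≤ 4 * ε := by rw [norm_sub_rev]; linarith

lemma tendsto_arccos_cosMaxAngle_map_sub {f g : ℕ → E →ₗ[ℝ] F} {V : Submodule ℝ E}
    {ε : ℕ → ℝ} (hε0 : ∀ n, 0 ≤ ε n) (hε : Tendsto ε atTop (𝓝 0))
    (h : ∀ n, ∀ v ∈ V, ‖f n v - g n v‖ ≤ ε n * ‖g n v‖) :
    Tendsto (fun j => Real.arccos (cosMaxAngle (V.map (f (j - 1))) (V.map (f j))) -
      Real.arccos (cosMaxAngle (V.map (g (j - 1))) (V.map (g j)))) atTop (𝓝 0) := by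
  refine tendsto_arccos_sub_arccos (fun _ => cosMaxAngle_mem_Icc _ _)
    (fun _ => cosMaxAngle_mem_Icc _ _) ?_
  have hε' : Tendsto (fun j => ε (j - 1)) atTop (𝓝 0) := hε.comp (tendsto_sub_atTop_nat 1)
  have hsmall : ∀ᶠ j in atTop, ε (j - 1) ≤ 1 / 2 ∧ ε j ≤ 1 / 2 :=
    (hε'.eventually (eventually_le_nhds (by norm_num))).and
      (hε.eventually (eventually_le_nhds (by norm_num)))
  refine squeeze_zero_norm' ?_ (by simpa using (hε'.add hε).const_mul 4)
  filter_upwards [hsmall] with j ⟨hj₁, hj₂⟩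
  obtain ⟨hV₁₂, hV₂₁⟩ := unitSphereClose_map_of_norm_sub_le (hε0 _) hj₁ (h (j - 1))
  obtain ⟨hW₁₂, hW₂₁⟩ := unitSphereClose_map_of_norm_sub_le (hε0 _) hj₂ (h j)
  rw [Real.norm_eq_abs, mul_add]
  exact abs_cosMaxAngle_sub_le (by linarith [hε0 (j - 1)]) (by linarith [hε0 j])
    hV₁₂ hV₂₁ hW₁₂ hW₂₁

end PrincipalAngle

lemma Submodule.exists_norm_le_mul_norm_apply {E F : Type*} [NormedAddCommGroup E]
    [NormedSpace ℝ E] [NormedAddCommGroup F] [NormedSpace ℝ F] (g : E →ₗ[ℝ] F)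
    (U : Submodule ℝ E) [FiniteDimensional ℝ U] (hg : ∀ x ∈ U, g x = 0 → x = 0) :
    ∃ c, 0 ≤ c ∧ ∀ x ∈ U, ‖x‖ ≤ c * ‖g x‖ := by
  have hinj : Function.Injective (g ∘ₗ U.subtype) := by
    rw [← LinearMap.ker_eq_bot, LinearMap.ker_eq_bot']
    exact fun x hx => Subtype.ext (hg x x.2 hx)
  obtain ⟨c, -, hc⟩ := (g ∘ₗ U.subtype).injective_iff_antilipschitz.1 hinj
  exact ⟨c, c.2, fun x hx => hc.le_mul_norm (map_zero _) ⟨x, hx⟩⟩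

section SolutionOperator

variable {d : ℕ} {A : ℕ → (Euc d →L[ℝ] Euc d)}

lemma Phi_self (n : ℕ) : Phi A n n = 1 := by
  simp [Phi, PhiF]

lemma isUnit_PhiF (hA : ∀ n, IsUnit (A n)) (m n : ℕ) : IsUnit (PhiF A m n) := by
  induction n with
  | zero => exact isUnit_one
  | succ n ih => exact (hA (m + n)).mul ih

lemma Phi_zero_apply_Phi_apply (hA : ∀ n, IsUnit (A n)) (n : ℕ) (x : Euc d) :
    Phi A 0 n (Phi A n 0 x) = x := by
  have hinv : Phi A 0 n = Ring.inverse (Phi A n 0) := by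
    rcases n with _ | n <;> simp [Phi, PhiF]
  rw [hinv, ← mul_apply_eq_comp, Ring.inverse_mul_cancel _ (by
    simpa [Phi] using isUnit_PhiF hA 0 n), one_apply_eq_self]

end SolutionOperator

lemma angSum_div_mem_Icc {d : ℕ} (A : ℕ → (Euc d →L[ℝ] Euc d)) (V : Submodule ℝ (Euc d)) (n : ℕ) :
    angSum A V 1 n / n ∈ Set.Icc 0 Real.pi := by
  rcases Nat.eq_zero_or_pos n with rfl | hn
  · simp [Real.pi_nonneg]
  have hsum : angSum A V 1 n ≤ n * Real.pi := by
    calc angSum A V 1 n ≤ ∑ _j ∈ Finset.Icc 1 n, Real.pi :=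
          Finset.sum_le_sum fun j _ => Real.arccos_le_pi _
      _ = n * Real.pi := by simp
  refine ⟨div_nonneg (Finset.sum_nonneg fun j _ => Real.arccos_nonneg _) n.cast_nonneg, ?_⟩
  rw [div_le_iff₀ (by exact_mod_cast hn)]
  linarith

structure IsProjFiltration {d : ℕ} (P : ℕ → ℕ → (Euc d →L[ℝ] Euc d)) (ℓ : ℕ) : Prop where
  idem : ∀ n i, 1 ≤ i → i ≤ ℓ + 1 → P n i ∘L P n i = P n i
  one : ∀ n, P n 1 = 1
  last : ∀ n, P n (ℓ + 1) = 0
  range_le : ∀ n i, 1 ≤ i → i ≤ ℓ →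
    LinearMap.range (P n (i + 1) : Euc d →ₗ[ℝ] Euc d) ≤ LinearMap.range (P n i : Euc d →ₗ[ℝ] Euc d)
  ker_le : ∀ n i, 1 ≤ i → i ≤ ℓ →
    LinearMap.ker (P n i : Euc d →ₗ[ℝ] Euc d) ≤ LinearMap.ker (P n (i + 1) : Euc d →ₗ[ℝ] Euc d)

namespace IsProjFiltration

variable {d ℓ : ℕ} {P : ℕ → ℕ → (Euc d →L[ℝ] Euc d)} (hP : IsProjFiltration P ℓ) {k i j : ℕ}
include hP

lemma apply_apply_self (hi : 1 ≤ i) (hiℓ : i ≤ ℓ + 1) (x : Euc d) : P k i (P k i x) = P k i x :=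
  DFunLike.congr_fun (hP.idem k i hi hiℓ) x

lemma apply_of_mem_range (hi : 1 ≤ i) (hiℓ : i ≤ ℓ + 1) {x : Euc d}
    (hx : x ∈ LinearMap.range (P k i : Euc d →ₗ[ℝ] Euc d)) : P k i x = x := by
  obtain ⟨y, rfl⟩ := hx
  exact hP.apply_apply_self hi hiℓ y

lemma range_antitone (hi : 1 ≤ i) (hij : i ≤ j) (hj : j ≤ ℓ + 1) :
    LinearMap.range (P k j : Euc d →ₗ[ℝ] Euc d) ≤ LinearMap.range (P k i : Euc d →ₗ[ℝ] Euc d) := by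
  induction j, hij using Nat.le_induction with
  | base => exact le_rfl
  | succ j hij ih => exact (hP.range_le k j (hi.trans hij) (by omega)).trans (ih (by omega))

lemma ker_monotone (hj : 1 ≤ j) (hji : j ≤ i) (hi : i ≤ ℓ + 1) :
    LinearMap.ker (P k j : Euc d →ₗ[ℝ] Euc d) ≤ LinearMap.ker (P k i : Euc d →ₗ[ℝ] Euc d) := by
  induction i, hji using Nat.le_induction with
  | base => exact le_rfl
  | succ i hji ih => exact (ih (by omega)).trans (hP.ker_le k i (hj.trans hji) (by omega))

lemma apply_apply (hi : 1 ≤ i) (hiℓ : i ≤ ℓ + 1) (hj : 1 ≤ j) (hjℓ : j ≤ ℓ + 1) (x : Euc d) :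
    P k i (P k j x) = P k (max i j) x := by
  rcases le_total i j with hij | hji
  · rw [max_eq_right hij]
    exact hP.apply_of_mem_range hi hiℓ (hP.range_antitone hi hij hjℓ (LinearMap.mem_range_self _ x))
  · rw [max_eq_left hji]
    have hker : x - P k j x ∈ LinearMap.ker (P k j : Euc d →ₗ[ℝ] Euc d) := by
      simp [hP.apply_apply_self hj hjℓ]
    have := hP.ker_monotone hj hji hiℓ hker
    simp only [LinearMap.mem_ker, ContinuousLinearMap.coe_coe, map_sub] at this
    exact (sub_eq_zero.1 this).symm

lemma fiberP_apply_fiberP (hi : 1 ≤ i) (hiℓ : i ≤ ℓ) (hj : 1 ≤ j) (hjℓ : j ≤ ℓ) (x : Euc d) :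
    fiberP P k i (fiberP P k j x) = if i = j then fiberP P k j x else 0 := by
  simp only [fiberP, sub_apply, map_sub]
  rw [hP.apply_apply hi (by omega) hj (by omega),
    hP.apply_apply hi (by omega) (by omega) (by omega),
    hP.apply_apply (by omega) (by omega) hj (by omega),
    hP.apply_apply (by omega) (by omega) (by omega) (by omega)]
  rcases lt_trichotomy i j with h | rfl | h
  · rw [if_neg h.ne, max_eq_right h.le, max_eq_right (by omega : i ≤ j + 1),
      max_eq_right (by omega : i + 1 ≤ j), max_eq_right (by omega : i + 1 ≤ j + 1)]
    abel
  · simp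
  · rw [if_neg h.ne', max_eq_left h.le, max_eq_left (by omega : j + 1 ≤ i),
      max_eq_left (by omega : j ≤ i + 1), max_eq_left (by omega : j + 1 ≤ i + 1)]
    abel

lemma apply_succ_fiberP (hi : 1 ≤ i) (hiℓ : i ≤ ℓ) (x : Euc d) :
    P k (i + 1) (fiberP P k i x) = 0 := by
  simp only [fiberP, sub_apply, map_sub]
  rw [hP.apply_apply (by omega) (by omega) hi (by omega), hP.apply_apply_self (by omega) (by omega),
    max_eq_left (by omega), sub_self]

lemma fiberP_apply_of_mem_range (hi : 1 ≤ i) (hiℓ : i ≤ ℓ) {x : Euc d}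
    (hx : x ∈ LinearMap.range (P k i : Euc d →ₗ[ℝ] Euc d)) :
    fiberP P k i x = x - P k (i + 1) x := by
  rw [fiberP, sub_apply, hP.apply_of_mem_range hi (by omega) hx]

lemma fiberP_apply_of_mem_range_succ (hi : 1 ≤ i) (hiℓ : i ≤ ℓ) {x : Euc d}
    (hx : x ∈ LinearMap.range (P k (i + 1) : Euc d →ₗ[ℝ] Euc d)) : fiberP P k i x = 0 := by
  rw [hP.fiberP_apply_of_mem_range hi hiℓ (hP.range_le k i hi hiℓ hx),
    hP.apply_of_mem_range (by omega) (by omega) hx, sub_self]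

end IsProjFiltration

section TraceMap

variable {d : ℕ} (P : ℕ → ℕ → (Euc d →L[ℝ] Euc d)) (V : Submodule ℝ (Euc d)) (ℓ : ℕ)

/-- `Q_{0,i}^s V = range (P_{0,i}^s) ∩ V`. -/
def stableSlice (i : ℕ) : Submodule ℝ (Euc d) := LinearMap.range (P 0 i : Euc d →ₗ[ℝ] Euc d) ⊓ V

/-- The orthogonal projection onto the orthogonal complement of `Q_{0,i+1}^s V` in `Q_{0,i}^s V`. -/
def layerProj (i : ℕ) : Euc d →L[ℝ] Euc d :=
  (stableSlice P V i).starProjection - (stableSlice P V (i + 1)).starProjection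

def traceMap : Euc d →L[ℝ] Euc d := ∑ i ∈ Finset.Icc 1 ℓ, fiberP P 0 i ∘L layerProj P V i

lemma traceMap_apply (x : Euc d) :
    traceMap P V ℓ x = ∑ i ∈ Finset.Icc 1 ℓ, fiberP P 0 i (layerProj P V i x) := by
  simp [traceMap]

lemma isTraceAt_traceSpace : IsTraceAt P ℓ 0 (traceSpace P ℓ 0 V) := by
  refine ⟨fun i => (LinearMap.range (P 0 i : Euc d →ₗ[ℝ] Euc d) ⊓ V).map
    (fiberP P 0 i : Euc d →ₗ[ℝ] Euc d), fun i _ _ => ?_, rfl⟩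
  exact LinearMap.map_le_range

variable {P V ℓ} (hP : IsProjFiltration P ℓ) {i j : ℕ}
include hP

lemma IsProjFiltration.stableSlice_antitone (hi : 1 ≤ i) (hij : i ≤ j) (hj : j ≤ ℓ + 1) :
    stableSlice P V j ≤ stableSlice P V i :=
  inf_le_inf_right V (hP.range_antitone hi hij hj)

lemma IsProjFiltration.stableSlice_one : stableSlice P V 1 = V := by
  have : LinearMap.range ((1 : Euc d →L[ℝ] Euc d) : Euc d →ₗ[ℝ] Euc d) = ⊤ :=
    LinearMap.range_eq_top.2 fun x => ⟨x, rfl⟩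
  rw [stableSlice, hP.one, this, top_inf_eq]

lemma IsProjFiltration.stableSlice_last : stableSlice P V (ℓ + 1) = ⊥ := by
  simp [stableSlice, hP.last]

lemma IsProjFiltration.layerProj_mem (hi : 1 ≤ i) (hiℓ : i ≤ ℓ) (x : Euc d) :
    layerProj P V i x ∈ stableSlice P V i ⊓ (stableSlice P V (i + 1))ᗮ := by
  have hle := hP.stableSlice_antitone (V := V) hi (Nat.le_succ i) (by omega)
  refine Submodule.mem_inf.2 ⟨Submodule.sub_mem _ (Submodule.starProjection_apply_mem _ x)
    (hle (Submodule.starProjection_apply_mem _ x)), ?_⟩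
  rw [← Submodule.starProjection_apply_eq_zero_iff, layerProj, sub_apply, map_sub,
    ← ContinuousLinearMap.comp_apply, Submodule.starProjection_comp_starProjection_of_le hle,
    ← ContinuousLinearMap.comp_apply, Submodule.starProjection_comp_starProjection_of_le le_rfl,
    sub_self]

lemma IsProjFiltration.layerProj_apply_of_mem (hi : 1 ≤ i) (hiℓ : i ≤ ℓ) (hj : 1 ≤ j) (hjℓ : j ≤ ℓ)
    {y : Euc d} (hy : y ∈ stableSlice P V i ⊓ (stableSlice P V (i + 1))ᗮ) :
    layerProj P V j y = if j = i then y else 0 := by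
  have proj_self {k} (hk : 1 ≤ k) (hki : k ≤ i) : (stableSlice P V k).starProjection y = y :=
    Submodule.starProjection_eq_self_iff.2 (hP.stableSlice_antitone hk hki (by omega) hy.1)
  have proj_zero {k} (hk : i + 1 ≤ k) (hkℓ : k ≤ ℓ + 1) :
      (stableSlice P V k).starProjection y = 0 :=
    (Submodule.starProjection_apply_eq_zero_iff _).2
      (Submodule.orthogonal_le (hP.stableSlice_antitone (by omega) hk hkℓ) hy.2)
  rw [layerProj, sub_apply]
  rcases lt_trichotomy j i with h | rfl | h
  · rw [if_neg h.ne, proj_self hj h.le, proj_self (by omega) h, sub_self]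
  · rw [if_pos rfl, proj_self hj le_rfl, proj_zero le_rfl (by omega), sub_zero]
  · rw [if_neg h.ne', proj_zero h (by omega), proj_zero (by omega) (by omega), sub_self]

lemma IsProjFiltration.sum_layerProj_apply {v : Euc d} (hv : v ∈ V) :
    ∑ i ∈ Finset.Icc 1 ℓ, layerProj P V i v = v := by
  simp only [layerProj, sub_apply]
  rw [sum_Icc_one_sub_succ (fun i => (stableSlice P V i).starProjection v), hP.stableSlice_last,
    Submodule.starProjection_bot, Submodule.starProjection_eq_self_iff.2 (hP.stableSlice_one ▸ hv)]
  simp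

lemma IsProjFiltration.fiberP_eq_zero_of_mem (hi : 1 ≤ i) (hiℓ : i ≤ ℓ) {y : Euc d}
    (hy : y ∈ stableSlice P V i ⊓ (stableSlice P V (i + 1))ᗮ) (h : fiberP P 0 i y = 0) : y = 0 := by
  rw [hP.fiberP_apply_of_mem_range hi hiℓ hy.1.1, sub_eq_zero] at h
  have hy' : y ∈ stableSlice P V (i + 1) := ⟨h ▸ LinearMap.mem_range_self _ y, hy.1.2⟩
  exact Submodule.disjoint_def.1 (Submodule.orthogonal_disjoint _) y hy' hy.2

lemma IsProjFiltration.exists_norm_layerProj_le (hi : 1 ≤ i) (hiℓ : i ≤ ℓ) :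
    ∃ c, 0 ≤ c ∧ ∀ x, ‖layerProj P V i x‖ ≤ c * ‖fiberP P 0 i (layerProj P V i x)‖ := by
  obtain ⟨c, hc0, hc⟩ := Submodule.exists_norm_le_mul_norm_apply (fiberP P 0 i : Euc d →ₗ[ℝ] Euc d)
    _ fun y hy => hP.fiberP_eq_zero_of_mem hi hiℓ hy
  exact ⟨c, hc0, fun x => hc _ (hP.layerProj_mem hi hiℓ x)⟩

lemma IsProjFiltration.fiberP_traceMap (hi : 1 ≤ i) (hiℓ : i ≤ ℓ) (x : Euc d) :
    fiberP P 0 i (traceMap P V ℓ x) = fiberP P 0 i (layerProj P V i x) := by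
  rw [traceMap_apply, map_sum, Finset.sum_eq_single_of_mem i (Finset.mem_Icc.2 ⟨hi, hiℓ⟩)]
  · rw [hP.fiberP_apply_fiberP hi hiℓ hi hiℓ, if_pos rfl]
  · intro j hj hji
    rw [Finset.mem_Icc] at hj
    rw [hP.fiberP_apply_fiberP hi hiℓ hj.1 hj.2, if_neg (Ne.symm hji)]

lemma IsProjFiltration.traceMap_layerProj (hi : 1 ≤ i) (hiℓ : i ≤ ℓ) (x : Euc d) :
    traceMap P V ℓ (layerProj P V i x) = fiberP P 0 i (layerProj P V i x) := by
  rw [traceMap_apply, Finset.sum_eq_single_of_mem i (Finset.mem_Icc.2 ⟨hi, hiℓ⟩)]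
  · rw [hP.layerProj_apply_of_mem hi hiℓ hi hiℓ (hP.layerProj_mem hi hiℓ x), if_pos rfl]
  · intro j hj hji
    rw [Finset.mem_Icc] at hj
    rw [hP.layerProj_apply_of_mem hi hiℓ hj.1 hj.2 (hP.layerProj_mem hi hiℓ x), if_neg hji,
      map_zero]

lemma IsProjFiltration.eq_zero_of_traceMap_eq_zero {v : Euc d} (hv : v ∈ V)
    (h : traceMap P V ℓ v = 0) : v = 0 := by
  rw [← hP.sum_layerProj_apply hv]
  refine Finset.sum_eq_zero fun i hi => ?_
  rw [Finset.mem_Icc] at hi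
  refine hP.fiberP_eq_zero_of_mem hi.1 hi.2 (hP.layerProj_mem hi.1 hi.2 v) ?_
  rw [← hP.fiberP_traceMap hi.1 hi.2, h, map_zero]

lemma IsProjFiltration.sub_traceMap {v : Euc d} (hv : v ∈ V) :
    v - traceMap P V ℓ v = ∑ i ∈ Finset.Icc 1 ℓ, P 0 (i + 1) (layerProj P V i v) := by
  rw [traceMap_apply]
  nth_rw 1 [← hP.sum_layerProj_apply hv]
  rw [← Finset.sum_sub_distrib]
  refine Finset.sum_congr rfl fun i hi => ?_
  rw [Finset.mem_Icc] at hi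
  rw [hP.fiberP_apply_of_mem_range hi.1 hi.2 (hP.layerProj_mem hi.1 hi.2 v).1.1, sub_sub_cancel]

lemma IsProjFiltration.traceSpace_eq_map :
    traceSpace P ℓ 0 V = V.map (traceMap P V ℓ : Euc d →ₗ[ℝ] Euc d) := by
  apply le_antisymm
  · refine iSup₂_le fun i hi => ?_
    rw [Finset.mem_Icc] at hi
    rintro _ ⟨x, hx, rfl⟩
    have hx' : x ∈ stableSlice P V i := hx
    have hrest : x - layerProj P V i x ∈ LinearMap.range (P 0 (i + 1) : Euc d →ₗ[ℝ] Euc d) := by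
      rw [layerProj, sub_apply, Submodule.starProjection_eq_self_iff.2 hx', sub_sub_cancel]
      exact (Submodule.starProjection_apply_mem (stableSlice P V (i + 1)) x).1
    refine ⟨layerProj P V i x, (hP.layerProj_mem hi.1 hi.2 x).1.2, ?_⟩
    rw [ContinuousLinearMap.coe_coe, hP.traceMap_layerProj hi.1 hi.2, ContinuousLinearMap.coe_coe,
      eq_comm, ← sub_eq_zero, ← map_sub, hP.fiberP_apply_of_mem_range_succ hi.1 hi.2 hrest]
  · rintro _ ⟨v, hv, rfl⟩
    rw [ContinuousLinearMap.coe_coe, traceMap_apply]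
    refine Submodule.sum_mem _ fun i hi => ?_
    refine (le_biSup (fun i => (LinearMap.range (P 0 i : Euc d →ₗ[ℝ] Euc d) ⊓ V).map
      (fiberP P 0 i : Euc d →ₗ[ℝ] Euc d)) hi) ⟨layerProj P V i v, ?_, rfl⟩
    rw [Finset.mem_Icc] at hi
    exact (hP.layerProj_mem hi.1 hi.2 v).1

lemma IsProjFiltration.finrank_traceSpace :
    Module.finrank ℝ (traceSpace P ℓ 0 V) = Module.finrank ℝ V := by
  have hinj : Function.Injective ((traceMap P V ℓ : Euc d →ₗ[ℝ] Euc d).domRestrict V) := by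
    rw [← LinearMap.ker_eq_bot, LinearMap.ker_eq_bot']
    exact fun v hv => Subtype.ext (hP.eq_zero_of_traceMap_eq_zero v.2 (by simpa using hv))
  rw [hP.traceSpace_eq_map, ← LinearMap.range_domRestrict, LinearMap.finrank_range_of_inj hinj]

end TraceMap

/-- `σ_{i+1}^+`, with the convention `σ_{ℓ+1}^+ = 0`. -/
def stableRate (ℓ : ℕ) (σp : ℕ → ℝ) (i : ℕ) : ℝ := if i = ℓ then 0 else σp (i + 1)

structure IsSpectralSplitting {d : ℕ} (A : ℕ → (Euc d →L[ℝ] Euc d))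
    (P : ℕ → ℕ → (Euc d →L[ℝ] Euc d)) (ℓ : ℕ) (K : ℝ) (σm σp : ℕ → ℝ) : Prop
    extends IsProjFiltration P ℓ where
  σm_pos : ∀ i, 1 ≤ i → i ≤ ℓ → 0 < σm i
  σm_le_σp : ∀ i, 1 ≤ i → i ≤ ℓ → σm i ≤ σp i
  σp_succ_lt_σm : ∀ i, 1 ≤ i → i < ℓ → σp (i + 1) < σm i
  comm : ∀ n m i, 1 ≤ i → i ≤ ℓ + 1 → P n i ∘L Phi A n m = Phi A n m ∘L P m i
  stable_bound : ∀ i, 1 ≤ i → i ≤ ℓ → ∀ n m : ℕ, m ≤ n →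
    ‖Phi A n m ∘L P m (i + 1)‖ ≤ K * stableRate ℓ σp i ^ (n - m)
  unstable_bound : ∀ i, 1 ≤ i → i ≤ ℓ → ∀ n m : ℕ, m ≤ n →
    ‖Phi A m n ∘L (1 - P n (i + 1))‖ ≤ K * (σm i ^ (n - m))⁻¹

namespace IsSpectralSplitting

variable {d ℓ : ℕ} {A : ℕ → (Euc d →L[ℝ] Euc d)} {P : ℕ → ℕ → (Euc d →L[ℝ] Euc d)} {K : ℝ}
  {σm σp : ℕ → ℝ} (hS : IsSpectralSplitting A P ℓ K σm σp) {i : ℕ}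
include hS

lemma stableRate_nonneg (hi : 1 ≤ i) (hiℓ : i ≤ ℓ) : 0 ≤ stableRate ℓ σp i := by
  unfold stableRate
  split_ifs with h
  · exact le_rfl
  · exact (hS.σm_pos (i + 1) (by omega) (by omega)).le.trans
      (hS.σm_le_σp (i + 1) (by omega) (by omega))

lemma stableRate_lt (hi : 1 ≤ i) (hiℓ : i ≤ ℓ) : stableRate ℓ σp i < σm i := by
  unfold stableRate
  split_ifs with h
  · exact hS.σm_pos i hi hiℓ
  · exact hS.σp_succ_lt_σm i hi (by omega)

lemma K_nonneg (hi : 1 ≤ i) (hiℓ : i ≤ ℓ) : 0 ≤ K := by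
  simpa using (norm_nonneg _).trans (hS.unstable_bound i hi hiℓ 0 0 le_rfl)

lemma norm_one_sub_P_le (hi : 1 ≤ i) (hiℓ : i ≤ ℓ) (n : ℕ) : ‖1 - P n (i + 1)‖ ≤ K := by
  have h := hS.unstable_bound i hi hiℓ n n le_rfl
  rwa [Phi_self, Nat.sub_self, pow_zero, inv_one, mul_one, ← ContinuousLinearMap.mul_def,
    one_mul] at h

lemma norm_fiberP_le (hi : 1 ≤ i) (hiℓ : i ≤ ℓ) (n : ℕ) : ‖fiberP P n i‖ ≤ 2 * K := by
  have hprev : ‖1 - P n i‖ ≤ K := by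
    rcases Nat.lt_or_ge 1 i with h | h
    · obtain ⟨j, rfl⟩ : ∃ j, i = j + 1 := ⟨i - 1, by omega⟩
      exact hS.norm_one_sub_P_le (by omega) (by omega) n
    · rw [show i = 1 by omega, hS.one, sub_self, norm_zero]
      exact hS.K_nonneg hi hiℓ
  calc ‖fiberP P n i‖ = ‖(1 - P n (i + 1)) - (1 - P n i)‖ := by rw [fiberP, sub_sub_sub_cancel_left]
    _ ≤ K + K := (norm_sub_le _ _).trans (add_le_add (hS.norm_one_sub_P_le hi hiℓ n) hprev)
    _ = 2 * K := by ring

lemma fiberP_Phi_apply (hi : 1 ≤ i) (hiℓ : i ≤ ℓ) (n : ℕ) (x : Euc d) :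
    fiberP P n i (Phi A n 0 x) = Phi A n 0 (fiberP P 0 i x) := by
  have h₁ := DFunLike.congr_fun (hS.comm n 0 i hi (by omega)) x
  have h₂ := DFunLike.congr_fun (hS.comm n 0 (i + 1) (by omega) (by omega)) x
  simp only [ContinuousLinearMap.comp_apply] at h₁ h₂
  simp only [fiberP, sub_apply, map_sub, h₁, h₂]

lemma norm_fiberP_le_Phi (hA : ∀ n, IsUnit (A n)) (hi : 1 ≤ i) (hiℓ : i ≤ ℓ) (n : ℕ)
    (z : Euc d) :
    ‖fiberP P 0 i z‖ ≤ K * (σm i ^ n)⁻¹ * ‖Phi A n 0 (fiberP P 0 i z)‖ := by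
  set y := fiberP P 0 i z
  have hy : (1 - P n (i + 1)) (Phi A n 0 y) = Phi A n 0 y := by
    have h := DFunLike.congr_fun (hS.comm n 0 (i + 1) (by omega) (by omega)) y
    simp only [ContinuousLinearMap.comp_apply] at h
    rw [sub_apply, h, hS.apply_succ_fiberP hi hiℓ, map_zero, sub_zero, one_apply_eq_self]
  calc ‖y‖ = ‖(Phi A 0 n ∘L (1 - P n (i + 1))) (Phi A n 0 y)‖ := by
        rw [ContinuousLinearMap.comp_apply, hy, Phi_zero_apply_Phi_apply hA]
    _ ≤ K * (σm i ^ n)⁻¹ * ‖Phi A n 0 y‖ :=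
        ContinuousLinearMap.le_of_opNorm_le _
          (by simpa using hS.unstable_bound i hi hiℓ n 0 (by omega)) _

lemma norm_Phi_P_succ_le (hi : 1 ≤ i) (hiℓ : i ≤ ℓ) (n : ℕ) (x : Euc d) :
    ‖Phi A n 0 (P 0 (i + 1) x)‖ ≤ K * stableRate ℓ σp i ^ n * ‖x‖ :=
  ContinuousLinearMap.le_of_opNorm_le (Phi A n 0 ∘L P 0 (i + 1))
    (by simpa using hS.stable_bound i hi hiℓ n 0 (by omega)) x

section Asymptotics

variable (hA : ∀ n, IsUnit (A n)) (V : Submodule ℝ (Euc d))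
include hA

lemma exists_norm_Phi_P_succ_layerProj_le (hi : 1 ≤ i) (hiℓ : i ≤ ℓ) :
    ∃ C, 0 ≤ C ∧ ∀ n x, ‖Phi A n 0 (P 0 (i + 1) (layerProj P V i x))‖ ≤
      C * (stableRate ℓ σp i / σm i) ^ n * ‖Phi A n 0 (traceMap P V ℓ x)‖ := by
  obtain ⟨c, hc0, hc⟩ := hS.exists_norm_layerProj_le (V := V) hi hiℓ
  have hK := hS.K_nonneg hi hiℓ
  have hσ := hS.σm_pos i hi hiℓ
  refine ⟨2 * K ^ 3 * c, by positivity, fun n x => ?_⟩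
  set u := layerProj P V i x
  have hsig := hS.stableRate_nonneg hi hiℓ
  have hfiber : ‖Phi A n 0 (fiberP P 0 i u)‖ ≤ 2 * K * ‖Phi A n 0 (traceMap P V ℓ x)‖ := by
    rw [← hS.fiberP_traceMap hi hiℓ, ← hS.fiberP_Phi_apply hi hiℓ]
    exact ContinuousLinearMap.le_of_opNorm_le _ (hS.norm_fiberP_le hi hiℓ n) _
  calc ‖Phi A n 0 (P 0 (i + 1) u)‖ ≤ K * stableRate ℓ σp i ^ n * ‖u‖ :=
        hS.norm_Phi_P_succ_le hi hiℓ n u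
    _ ≤ K * stableRate ℓ σp i ^ n * (c * (K * (σm i ^ n)⁻¹ * ‖Phi A n 0 (fiberP P 0 i u)‖)) := by
        gcongr
        exact (hc x).trans (by gcongr; exact hS.norm_fiberP_le_Phi hA hi hiℓ n u)
    _ = K ^ 2 * c * (stableRate ℓ σp i / σm i) ^ n * ‖Phi A n 0 (fiberP P 0 i u)‖ := by
        rw [div_pow]
        ring
    _ ≤ K ^ 2 * c * (stableRate ℓ σp i / σm i) ^ n * (2 * K * ‖Phi A n 0 (traceMap P V ℓ x)‖) := by
        gcongr
    _ = 2 * K ^ 3 * c * (stableRate ℓ σp i / σm i) ^ n * ‖Phi A n 0 (traceMap P V ℓ x)‖ := by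
        ring

lemma exists_norm_Phi_sub_traceMap_le :
    ∃ ε : ℕ → ℝ, (∀ n, 0 ≤ ε n) ∧ Tendsto ε atTop (𝓝 0) ∧ ∀ n, ∀ v ∈ V,
      ‖Phi A n 0 v - Phi A n 0 (traceMap P V ℓ v)‖ ≤ ε n * ‖Phi A n 0 (traceMap P V ℓ v)‖ := by
  have hC : ∀ i, ∃ C, 0 ≤ C ∧ (i ∈ Finset.Icc 1 ℓ → ∀ n x,
      ‖Phi A n 0 (P 0 (i + 1) (layerProj P V i x))‖ ≤
        C * (stableRate ℓ σp i / σm i) ^ n * ‖Phi A n 0 (traceMap P V ℓ x)‖) := fun i => by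
    by_cases hi : i ∈ Finset.Icc 1 ℓ
    · rw [Finset.mem_Icc] at hi
      obtain ⟨C, hC0, hC⟩ := hS.exists_norm_Phi_P_succ_layerProj_le hA V hi.1 hi.2
      exact ⟨C, hC0, fun _ => hC⟩
    · exact ⟨0, le_rfl, fun h => absurd h hi⟩
  choose C hC0 hC using hC
  have hrate : ∀ i ∈ Finset.Icc 1 ℓ, 0 ≤ stableRate ℓ σp i / σm i ∧ stableRate ℓ σp i / σm i < 1 :=
    fun i hi => by
      rw [Finset.mem_Icc] at hi
      have hσ := hS.σm_pos i hi.1 hi.2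
      exact ⟨div_nonneg (hS.stableRate_nonneg hi.1 hi.2) hσ.le,
        (div_lt_one hσ).2 (hS.stableRate_lt hi.1 hi.2)⟩
  refine ⟨fun n => ∑ i ∈ Finset.Icc 1 ℓ, C i * (stableRate ℓ σp i / σm i) ^ n,
    fun n => Finset.sum_nonneg fun i hi => mul_nonneg (hC0 i) (pow_nonneg (hrate i hi).1 n), ?_,
    fun n v hv => ?_⟩
  · simpa using tendsto_finsetSum _ fun i hi =>
      (tendsto_pow_atTop_nhds_zero_of_lt_one (hrate i hi).1 (hrate i hi).2).const_mul (C i)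
  · rw [← map_sub, hS.sub_traceMap hv, map_sum, Finset.sum_mul]
    exact (norm_sum_le _ _).trans (Finset.sum_le_sum fun i hi => hC i hi n v)

lemma tendsto_subAngle_sub_traceSpace :
    Tendsto (fun j => subAngle (V.map (Phi A (j - 1) 0 : Euc d →ₗ[ℝ] Euc d))
        (V.map (Phi A j 0 : Euc d →ₗ[ℝ] Euc d)) -
      subAngle ((traceSpace P ℓ 0 V).map (Phi A (j - 1) 0 : Euc d →ₗ[ℝ] Euc d))
        ((traceSpace P ℓ 0 V).map (Phi A j 0 : Euc d →ₗ[ℝ] Euc d))) atTop (𝓝 0) := by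
  obtain ⟨ε, hε0, hε, hbound⟩ := hS.exists_norm_Phi_sub_traceMap_le hA V
  simp only [subAngle_eq_arccos_cosMaxAngle, hS.traceSpace_eq_map, ← Submodule.map_comp]
  exact tendsto_arccos_cosMaxAngle_map_sub (f := fun n => (Phi A n 0 : Euc d →ₗ[ℝ] Euc d))
    (g := fun n => (Phi A n 0 : Euc d →ₗ[ℝ] Euc d) ∘ₗ (traceMap P V ℓ : Euc d →ₗ[ℝ] Euc d))
    hε0 hε hbound

lemma tendsto_angSum_sub_traceSpace :
    Tendsto ((fun n : ℕ => angSum A V 1 n / n) - fun n : ℕ => angSum A (traceSpace P ℓ 0 V) 1 n / n)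
      atTop (𝓝 0) := by
  refine (tendsto_sum_Icc_div_of_tendsto_zero (hS.tendsto_subAngle_sub_traceSpace hA V)).congr
    fun n => ?_
  rw [Pi.sub_apply, angSum, angSum, ← sub_div, ← Finset.sum_sub_distrib]

lemma limsup_angSum_eq_traceSpace :
    limsup (fun n : ℕ => angSum A V 1 n / n) atTop =
      limsup (fun n : ℕ => angSum A (traceSpace P ℓ 0 V) 1 n / n) atTop :=
  limsup_eq_of_tendsto_sub (isBoundedUnder_of ⟨Real.pi, fun n => (angSum_div_mem_Icc A _ n).2⟩)
    (isBoundedUnder_of ⟨0, fun n => (angSum_div_mem_Icc A _ n).1⟩)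
    (hS.tendsto_angSum_sub_traceSpace hA V)

lemma liminf_angSum_eq_traceSpace :
    liminf (fun n : ℕ => angSum A V 1 n / n) atTop =
      liminf (fun n : ℕ => angSum A (traceSpace P ℓ 0 V) 1 n / n) atTop :=
  liminf_eq_of_tendsto_sub (isBoundedUnder_of ⟨Real.pi, fun n => (angSum_div_mem_Icc A _ n).2⟩)
    (isBoundedUnder_of ⟨0, fun n => (angSum_div_mem_Icc A _ n).1⟩)
    (hS.tendsto_angSum_sub_traceSpace hA V)

end Asymptotics

end IsSpectralSplitting

theorem outer_angular_values_reduce_to_traceSpaces_general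
    {d : ℕ} (A : ℕ → (Euc d →L[ℝ] Euc d)) (hA : ∀ n, IsUnit (A n))
    (ℓ : ℕ) (K : ℝ)
    (σm σp : ℕ → ℝ)
    (hσ0 : ∀ i, 1 ≤ i → i ≤ ℓ → 0 < σm i)
    (hσ1 : ∀ i, 1 ≤ i → i ≤ ℓ → σm i ≤ σp i)
    (hσ2 : ∀ i, 1 ≤ i → i < ℓ → σp (i + 1) < σm i)
    (P : ℕ → ℕ → (Euc d →L[ℝ] Euc d))
    (hproj : ∀ n i, 1 ≤ i → i ≤ ℓ + 1 → P n i ∘L P n i = P n i)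
    (hP1 : ∀ n, P n 1 = 1)
    (hPl : ∀ n, P n (ℓ + 1) = 0)
    (hcomm : ∀ n m i, 1 ≤ i → i ≤ ℓ + 1 → P n i ∘L Phi A n m = Phi A n m ∘L P m i)
    (hrange : ∀ n i, 1 ≤ i → i ≤ ℓ → LinearMap.range (P n (i + 1) : Euc d →ₗ[ℝ] Euc d) ≤ LinearMap.range (P n i : Euc d →ₗ[ℝ] Euc d))
    (hker : ∀ n i, 1 ≤ i → i ≤ ℓ → LinearMap.ker (P n i : Euc d →ₗ[ℝ] Euc d) ≤ LinearMap.ker (P n (i + 1) : Euc d →ₗ[ℝ] Euc d))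
    (hbndS : ∀ i, 1 ≤ i → i ≤ ℓ → ∀ n m : ℕ, m ≤ n →
      ‖Phi A n m ∘L P m (i + 1)‖ ≤ K * (if i = ℓ then (0 : ℝ) else σp (i + 1)) ^ (n - m))
    (hbndU : ∀ i, 1 ≤ i → i ≤ ℓ → ∀ n m : ℕ, m ≤ n →
      ‖Phi A m n ∘L (1 - P n (i + 1))‖ ≤ K * (σm i ^ (n - m))⁻¹)
    (s : ℕ) :
    sSup {x : ℝ | ∃ V : Submodule ℝ (Euc d), Module.finrank ℝ V = s ∧
        x = limsup (fun n : ℕ => angSum A V 1 n / n) atTop} =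
      sSup {x : ℝ | ∃ V : Submodule ℝ (Euc d), IsTraceAt P ℓ 0 V ∧
        Module.finrank ℝ V = s ∧
        x = limsup (fun n : ℕ => angSum A V 1 n / n) atTop} ∧
    sSup {x : ℝ | ∃ V : Submodule ℝ (Euc d), Module.finrank ℝ V = s ∧
        x = liminf (fun n : ℕ => angSum A V 1 n / n) atTop} =
      sSup {x : ℝ | ∃ V : Submodule ℝ (Euc d), IsTraceAt P ℓ 0 V ∧
        Module.finrank ℝ V = s ∧
        x = liminf (fun n : ℕ => angSum A V 1 n / n) atTop} := by
  have hS : IsSpectralSplitting A P ℓ K σm σp :=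
    ⟨⟨hproj, hP1, hPl, hrange, hker⟩, hσ0, hσ1, hσ2, hcomm, hbndS, hbndU⟩
  refine ⟨congrArg sSup (Set.ext fun x => ⟨?_, ?_⟩), congrArg sSup (Set.ext fun x => ⟨?_, ?_⟩)⟩
  · rintro ⟨V, rfl, rfl⟩
    exact ⟨_, isTraceAt_traceSpace P V ℓ, hS.finrank_traceSpace,
      hS.limsup_angSum_eq_traceSpace hA V⟩
  · rintro ⟨V, -, hV⟩
    exact ⟨V, hV⟩
  · rintro ⟨V, rfl, rfl⟩
    exact ⟨_, isTraceAt_traceSpace P V ℓ, hS.finrank_traceSpace,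
      hS.liminf_angSum_eq_traceSpace hA V⟩
  · rintro ⟨V, -, hV⟩
    exact ⟨V, hV⟩

/-- Under the spectral hypotheses, the upper and lower `s`-th outer angular
values can be computed over trace spaces only:
`θ̂_s = sup_{V∈𝒢(s,d)} limsup (1/n) a_{1,n}(V) = sup_{V∈𝒟_0(s,d)} limsup (1/n) a_{1,n}(V)`,
and likewise with `liminf`. -/
theorem outer_angular_values_reduce_to_traceSpaces
    {d : ℕ} (A : ℕ → (Euc d →L[ℝ] Euc d)) (hA : ∀ n, IsUnit (A n))
    (hbd : ∃ Cb : ℝ, ∀ n, ‖A n‖ + ‖Ring.inverse (A n)‖ ≤ Cb)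
    (ℓ : ℕ) (hℓ : 1 ≤ ℓ) (K : ℝ) (hK : 1 ≤ K)
    (σm σp : ℕ → ℝ)
    (hσ0 : ∀ i, 1 ≤ i → i ≤ ℓ → 0 < σm i)
    (hσ1 : ∀ i, 1 ≤ i → i ≤ ℓ → σm i ≤ σp i)
    (hσ2 : ∀ i, 1 ≤ i → i < ℓ → σp (i + 1) < σm i)
    (P : ℕ → ℕ → (Euc d →L[ℝ] Euc d))
    (hproj : ∀ n i, 1 ≤ i → i ≤ ℓ + 1 → P n i ∘L P n i = P n i)
    (hP1 : ∀ n, P n 1 = 1)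
    (hPl : ∀ n, P n (ℓ + 1) = 0)
    (hcomm : ∀ n m i, 1 ≤ i → i ≤ ℓ + 1 → P n i ∘L Phi A n m = Phi A n m ∘L P m i)
    (hrange : ∀ n i, 1 ≤ i → i ≤ ℓ → LinearMap.range (P n (i + 1) : Euc d →ₗ[ℝ] Euc d) ≤ LinearMap.range (P n i : Euc d →ₗ[ℝ] Euc d))
    (hker : ∀ n i, 1 ≤ i → i ≤ ℓ → LinearMap.ker (P n i : Euc d →ₗ[ℝ] Euc d) ≤ LinearMap.ker (P n (i + 1) : Euc d →ₗ[ℝ] Euc d))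
    (hbndS : ∀ i, 1 ≤ i → i ≤ ℓ → ∀ n m : ℕ, m ≤ n →
      ‖Phi A n m ∘L P m (i + 1)‖ ≤ K * (if i = ℓ then (0 : ℝ) else σp (i + 1)) ^ (n - m))
    (hbndU : ∀ i, 1 ≤ i → i ≤ ℓ → ∀ n m : ℕ, m ≤ n →
      ‖Phi A m n ∘L (1 - P n (i + 1))‖ ≤ K * (σm i ^ (n - m))⁻¹)
    (s : ℕ) (hs1 : 1 ≤ s) (hsd : s ≤ d) :
    sSup {x : ℝ | ∃ V : Submodule ℝ (Euc d), Module.finrank ℝ V = s ∧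
        x = limsup (fun n : ℕ => angSum A V 1 n / n) atTop} =
      sSup {x : ℝ | ∃ V : Submodule ℝ (Euc d), IsTraceAt P ℓ 0 V ∧
        Module.finrank ℝ V = s ∧
        x = limsup (fun n : ℕ => angSum A V 1 n / n) atTop} ∧
    sSup {x : ℝ | ∃ V : Submodule ℝ (Euc d), Module.finrank ℝ V = s ∧
        x = liminf (fun n : ℕ => angSum A V 1 n / n) atTop} =
      sSup {x : ℝ | ∃ V : Submodule ℝ (Euc d), IsTraceAt P ℓ 0 V ∧
        Module.finrank ℝ V = s ∧
        x = liminf (fun n : ℕ => angSum A V 1 n / n) atTop} :=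
  outer_angular_values_reduce_to_traceSpaces_general A hA ℓ K σm σp hσ0 hσ1 hσ2 P hproj hP1 hPl
    hcomm hrange hker hbndS hbndU s
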